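/- arXiv:1607.05459 — 9 statements merged into one kernel-verified Lean document; each statement's English description precedes it below -/
import Mathlib

section
/- Let f : ℝ₊ᵏ → ℝ₊₊ᵏ be a standard interference function. Then f has at most one fixed point in ℝ₊₊ᵏ, i.e., there is at most one x ∈ ℝ₊₊ᵏ with x = f(x). -/
/-!
If `x` and `y` are positive fixed points and some `y j` exceeds `x j`, scale `x` by the
largest ratio `α = y i / x i > 1`. Then `y ≤ α • x` with equality at `i`, so monotonicity
and strict scalability give `y i = f y i ≤ f (α • x) i < α * f x i = α * x i = y i`.
By symmetry the two fixed points coincide.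
-/

lemma exists_le_smul_of_pos {ι : Type*} [Finite ι] [Nonempty ι] (x y : ι → ℝ)
    (hx : ∀ i, 0 < x i) : ∃ α : ℝ, ∃ i, y ≤ α • x ∧ y i = α * x i := by
  obtain ⟨i, hi⟩ := Finite.exists_max fun i => y i / x i
  refine ⟨y i / x i, i, fun j => ?_, (div_mul_cancel₀ _ (hx i).ne').symm⟩
  simpa only [Pi.smul_apply, smul_eq_mul] using (div_le_iff₀ (hx j)).mp (hi j)

lemma le_of_isFixedPt_of_scalable {ι : Type*} [Finite ι] (f : (ι → ℝ) → (ι → ℝ))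
    (hmono : ∀ x y : ι → ℝ, (∀ i, 0 ≤ x i) → x ≤ y → f x ≤ f y)
    (hscale : ∀ α : ℝ, 1 < α → ∀ x : ι → ℝ, (∀ i, 0 ≤ x i) →
      ∀ i, f (α • x) i < α * f x i)
    {x y : ι → ℝ} (hx : ∀ i, 0 < x i) (hy : ∀ i, 0 ≤ y i)
    (hfx : Function.IsFixedPt f x) (hfy : Function.IsFixedPt f y) : y ≤ x := by
  by_contra hyx
  obtain ⟨j, hj⟩ : ∃ j, x j < y j := by simpa [Pi.le_def] using hyx
  have : Nonempty ι := ⟨j⟩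
  obtain ⟨α, i, hyαx, hyi⟩ := exists_le_smul_of_pos x y hx
  have hα : 1 < α := by
    have : 1 * x j < α * x j := by simpa using hj.trans_le (hyαx j)
    exact lt_of_mul_lt_mul_right this (hx j).le
  have := calc
    y i = f y i := (congrFun hfy i).symm
    _ ≤ f (α • x) i := hmono y _ hy hyαx i
    _ < α * f x i := hscale α hα x (fun i => (hx i).le) i
    _ = y i := by rw [hfx, hyi]
  exact lt_irrefl _ this

theorem sif_fixed_point_unique_general (k : ℕ) (f : (Fin k → ℝ) → (Fin k → ℝ))
    (hmono : ∀ x y : Fin k → ℝ, (∀ i, 0 ≤ x i) → x ≤ y → f x ≤ f y)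
    (hscale : ∀ α : ℝ, 1 < α → ∀ x : Fin k → ℝ, (∀ i, 0 ≤ x i) →
      ∀ i, f (α • x) i < α * f x i) :
    ∀ x y : Fin k → ℝ, (∀ i, 0 < x i) → (∀ i, 0 < y i) →
      x = f x → y = f y → x = y := by
  intro x y hx hy hfx hfy
  exact le_antisymm
    (le_of_isFixedPt_of_scalable f hmono hscale hy (fun i => (hx i).le) hfy.symm hfx.symm)
    (le_of_isFixedPt_of_scalable f hmono hscale hx (fun i => (hy i).le) hfx.symm hfy.symm)

/-- A standard interference function has at most one fixed point in
the positive orthant. -/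
theorem sif_fixed_point_unique (k : ℕ) (f : (Fin k → ℝ) → (Fin k → ℝ))
    (hpos : ∀ x : Fin k → ℝ, (∀ i, 0 ≤ x i) → ∀ i, 0 < f x i)
    (hmono : ∀ x y : Fin k → ℝ, (∀ i, 0 ≤ x i) → x ≤ y → f x ≤ f y)
    (hscale : ∀ α : ℝ, 1 < α → ∀ x : Fin k → ℝ, (∀ i, 0 ≤ x i) →
      ∀ i, f (α • x) i < α * f x i) :
    ∀ x y : Fin k → ℝ, (∀ i, 0 < x i) → (∀ i, 0 < y i) →
      x = f x → y = f y → x = y :=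
  sif_fixed_point_unique_general k f hmono hscale
end

section
/- Let f : ℝ₊ᵏ → ℝ₊₊ᵏ be a standard interference function. Then f has a fixed point (some x ∈ ℝ₊₊ᵏ with x = f(x)) if and only if there exists x' ∈ ℝ₊₊ᵏ satisfying f(x') ≤ x' componentwise. -/
open Set Function

/-- Knaster–Tarski on an order interval: `Icc a b` of a conditionally complete lattice is a
complete lattice, and `f` restricts to a monotone self-map of it. -/
theorem MonotoneOn.exists_mem_Icc_isFixedPt {α : Type*} [ConditionallyCompleteLattice α]
    {a b : α} {f : α → α} (hf : MonotoneOn f (Icc a b)) (hab : a ≤ b) (ha : a ≤ f a)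
    (hb : f b ≤ b) : ∃ x ∈ Icc a b, IsFixedPt f x := by
  have : Fact (a ≤ b) := ⟨hab⟩
  have hmaps : MapsTo f (Icc a b) (Icc a b) := fun y hy =>
    ⟨ha.trans (hf (left_mem_Icc.2 hab) hy hy.1),
      (hf hy (right_mem_Icc.2 hab) hy.2).trans hb⟩
  let g : Icc a b →o Icc a b := ⟨hmaps.restrict f _ _, fun x y hxy => hf x.2 y.2 hxy⟩
  exact ⟨g.lfp, g.lfp.2, congrArg Subtype.val g.map_lfp⟩

theorem sif_fixed_point_exists_iff_general (k : ℕ) (f : (Fin k → ℝ) → (Fin k → ℝ))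
    (hpos : ∀ x : Fin k → ℝ, (∀ i, 0 ≤ x i) → ∀ i, 0 < f x i)
    (hmono : ∀ x y : Fin k → ℝ, (∀ i, 0 ≤ x i) → x ≤ y → f x ≤ f y) :
    (∃ x : Fin k → ℝ, (∀ i, 0 < x i) ∧ x = f x) ↔
      (∃ x' : Fin k → ℝ, (∀ i, 0 < x' i) ∧ f x' ≤ x') := by
  constructor
  · rintro ⟨x, hx, hfx⟩
    exact ⟨x, hx, hfx.ge⟩
  · rintro ⟨x', hx', hfx'⟩
    have hmonoOn : MonotoneOn f (Icc 0 x') := fun y hy z _ hyz => hmono y z hy.1 hyz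
    obtain ⟨x, hx, hfix⟩ := hmonoOn.exists_mem_Icc_isFixedPt (fun i => (hx' i).le)
      (fun i => (hpos 0 (fun _ => le_rfl) i).le) hfx'
    refine ⟨x, fun i => ?_, hfix.symm⟩
    rw [← hfix]
    exact hpos x hx.1 i

/-- A standard interference function has a fixed point in the positive
orthant if and only if there exists a positive `x'` with `f x' ≤ x'` componentwise. -/
theorem sif_fixed_point_exists_iff (k : ℕ) (f : (Fin k → ℝ) → (Fin k → ℝ))
    (hpos : ∀ x : Fin k → ℝ, (∀ i, 0 ≤ x i) → ∀ i, 0 < f x i)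
    (hmono : ∀ x y : Fin k → ℝ, (∀ i, 0 ≤ x i) → x ≤ y → f x ≤ f y)
    (hscale : ∀ α : ℝ, 1 < α → ∀ x : Fin k → ℝ, (∀ i, 0 ≤ x i) →
      ∀ i, f (α • x) i < α * f x i) :
    (∃ x : Fin k → ℝ, (∀ i, 0 < x i) ∧ x = f x) ↔
      (∃ x' : Fin k → ℝ, (∀ i, 0 < x' i) ∧ f x' ≤ x') :=
  sif_fixed_point_exists_iff_general k f hpos hmono
end

section
/- Let f : ℝ₊ᵏ → ℝ₊₊ᵏ be a standard interference function that possesses a fixed point x* = f(x*). Then for every initial point x⁽¹⁾ ∈ ℝ₊ᵏ, the sequence defined by x⁽ⁿ⁺¹⁾ = f(x⁽ⁿ⁾) converges to x*. -/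
/-! Squeeze the orbit of `x` between the orbits of `0` and of `A • x*`, where `A > 1` is
large enough that `x ≤ A • x*`. By monotonicity the orbit of `0` increases and the orbit of
`A • x*` decreases (scalability gives `f (A • x*) ≤ A • x*`), and both stay on their side of
`x*`, so both converge. Scalability also shows that the limit `y` of the decreasing orbit
satisfies `y ≤ f y` (and the limit of the increasing one `f y ≤ y`), with no continuity of
`f`. Finally, a sub-fixed point `a` never exceeds a positive super-fixed point `b`: if `β > 1`
is the largest ratio `a j / b j`, attained at `j`, then
`a j ≤ f a j ≤ f (β • b) j < β * f b j ≤ β * b j = a j`. Hence both limits equal `x*`. -/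

open Filter Topology Function

structure IsStandardInterference {ι : Type*} (f : (ι → ℝ) → ι → ℝ) : Prop where
  pos : ∀ x, 0 ≤ x → ∀ i, 0 < f x i
  mono : ∀ x y, 0 ≤ x → x ≤ y → f x ≤ f y
  scale : ∀ α : ℝ, 1 < α → ∀ x, 0 ≤ x → ∀ i, f (α • x) i < α * f x i

lemma exists_one_lt_le_smul {ι : Type*} [Finite ι] (x : ι → ℝ) {b : ι → ℝ}
    (hb : ∀ i, 0 < b i) : ∃ A : ℝ, 1 < A ∧ x ≤ A • b := by
  have hlarge : ∀ i, ∀ᶠ A in atTop, x i ≤ A * b i := fun i =>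
    (tendsto_id.atTop_mul_const (hb i)).eventually_ge_atTop (x i)
  exact ((eventually_gt_atTop 1).and (eventually_all.2 hlarge)).exists

namespace IsStandardInterference

variable {ι : Type*} {f : (ι → ℝ) → ι → ℝ}

lemma map_nonneg (hf : IsStandardInterference f) {x : ι → ℝ} (hx : 0 ≤ x) : 0 ≤ f x :=
  fun i => (hf.pos x hx i).le

lemma map_smul_le (hf : IsStandardInterference f) {α : ℝ} (hα : 1 < α) {x : ι → ℝ}
    (hx : 0 ≤ x) : f (α • x) ≤ α • f x :=
  fun i => (hf.scale α hα x hx i).le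

lemma iterate_nonneg (hf : IsStandardInterference f) {x : ι → ℝ} (hx : 0 ≤ x) (n : ℕ) :
    0 ≤ f^[n] x := by
  induction n generalizing x with
  | zero => exact hx
  | succ n ih => exact ih (hf.map_nonneg hx)

lemma iterate_mono (hf : IsStandardInterference f) {x y : ι → ℝ} (hx : 0 ≤ x) (hxy : x ≤ y)
    (n : ℕ) : f^[n] x ≤ f^[n] y := by
  induction n generalizing x y with
  | zero => exact hxy
  | succ n ih => exact ih (hf.map_nonneg hx) (hf.mono x y hx hxy)

lemma le_of_le_map_of_map_le [Fintype ι] (hf : IsStandardInterference f) {a b : ι → ℝ}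
    (ha : 0 ≤ a) (hfa : a ≤ f a) (hb : ∀ i, 0 < b i) (hfb : f b ≤ b) : a ≤ b := by
  intro i
  obtain ⟨j, -, hj⟩ :=
    Finset.exists_max_image Finset.univ (fun j => a j / b j) ⟨i, Finset.mem_univ i⟩
  set β := a j / b j
  have hab : a ≤ β • b := fun l => (div_le_iff₀ (hb l)).mp (hj l (Finset.mem_univ l))
  by_contra! hi
  have hβ : 1 < β := ((one_lt_div (hb i)).mpr hi).trans_le (hj i (Finset.mem_univ i))
  have hlt : a j < a j := calc
    a j ≤ f a j := hfa j
    _ ≤ f (β • b) j := hf.mono a _ ha hab j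
    _ < β * f b j := hf.scale β hβ b (fun l => (hb l).le) j
    _ ≤ β * b j := mul_le_mul_of_nonneg_left (hfb j) (by positivity)
    _ = a j := div_mul_cancel₀ _ (hb j).ne'
  exact hlt.false

lemma le_map_of_tendsto_iterate [Finite ι] (hf : IsStandardInterference f) {z y : ι → ℝ}
    (hz : 0 ≤ z) (hy : ∀ i, 0 < y i) (hlim : Tendsto (fun n => f^[n] z) atTop (𝓝 y))
    (hle : ∀ n, y ≤ f^[n] z) : y ≤ f y := by
  intro i
  refine (le_iff_forall_one_lt_le_mul₀ (hf.pos y (fun j => (hy j).le) i).le).2 fun α hα => ?_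
  obtain ⟨N, hN⟩ : ∃ N, f^[N] z ≤ α • y := by
    have hnear : ∀ j, ∀ᶠ n in atTop, f^[n] z j < α * y j := fun j =>
      (tendsto_pi_nhds.1 hlim j).eventually_lt_const (lt_mul_of_one_lt_left (hy j) hα)
    obtain ⟨N, hN⟩ := (eventually_all.2 hnear).exists
    exact ⟨N, fun j => (hN j).le⟩
  calc y i ≤ f^[N + 1] z i := hle (N + 1) i
    _ = f (f^[N] z) i := by rw [iterate_succ_apply']
    _ ≤ f (α • y) i := hf.mono _ _ (hf.iterate_nonneg hz N) hN i
    _ ≤ α * f y i := (hf.scale α hα y (fun j => (hy j).le) i).le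
    _ = f y i * α := mul_comm _ _

lemma map_le_of_tendsto_iterate [Finite ι] (hf : IsStandardInterference f) {z y : ι → ℝ}
    (hz : 0 ≤ z) (hy : ∀ i, 0 < y i) (hlim : Tendsto (fun n => f^[n] z) atTop (𝓝 y))
    (hle : ∀ n, f^[n] z ≤ y) : f y ≤ y := by
  intro i
  refine (le_iff_forall_one_lt_le_mul₀ (hy i).le).2 fun α hα => ?_
  obtain ⟨N, hN⟩ : ∃ N, y ≤ α • f^[N] z := by
    have hnear : ∀ j, ∀ᶠ n in atTop, y j < α * f^[n] z j := fun j =>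
      ((tendsto_pi_nhds.1 hlim j).const_mul α).eventually_const_lt
        (lt_mul_of_one_lt_left (hy j) hα)
    obtain ⟨N, hN⟩ := (eventually_all.2 hnear).exists
    exact ⟨N, fun j => (hN j).le⟩
  calc f y i ≤ f (α • f^[N] z) i := hf.mono _ _ (fun j => (hy j).le) hN i
    _ ≤ α * f (f^[N] z) i := (hf.scale α hα _ (hf.iterate_nonneg hz N) i).le
    _ = α * f^[N + 1] z i := by rw [iterate_succ_apply']
    _ ≤ α * y i := mul_le_mul_of_nonneg_left (hle (N + 1) i) (by positivity)
    _ = y i * α := mul_comm _ _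

lemma tendsto_iterate_of_le_of_map_le [Fintype ι] (hf : IsStandardInterference f)
    {xstar z : ι → ℝ} (hfix : IsFixedPt f xstar) (hxstar : ∀ i, 0 < xstar i)
    (hxz : xstar ≤ z) (hfz : f z ≤ z) : Tendsto (fun n => f^[n] z) atTop (𝓝 xstar) := by
  have hxstar0 : 0 ≤ xstar := fun i => (hxstar i).le
  have hz : 0 ≤ z := hxstar0.trans hxz
  have hanti : Antitone fun n => f^[n] z := antitone_nat_of_succ_le fun n => by
    rw [iterate_succ_apply]
    exact hf.iterate_mono (hf.map_nonneg hz) hfz n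
  have hbelow : ∀ n, xstar ≤ f^[n] z := fun n =>
    (hfix.iterate n).symm.le.trans (hf.iterate_mono hxstar0 hxz n)
  have hlim := tendsto_atTop_ciInf hanti ⟨xstar, Set.forall_mem_range.2 hbelow⟩
  have hxy : xstar ≤ ⨅ n, f^[n] z := le_ciInf hbelow
  have hypos : ∀ i, 0 < (⨅ n, f^[n] z) i := fun i => (hxstar i).trans_le (hxy i)
  have hyx : ⨅ n, f^[n] z ≤ xstar :=
    hf.le_of_le_map_of_map_le (hxstar0.trans hxy)
      (hf.le_map_of_tendsto_iterate hz hypos hlim (hanti.le_of_tendsto hlim)) hxstar hfix.le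
  rwa [le_antisymm hyx hxy] at hlim

lemma tendsto_iterate_of_le_of_le_map [Fintype ι] (hf : IsStandardInterference f)
    {xstar z : ι → ℝ} (hfix : IsFixedPt f xstar) (hxstar : ∀ i, 0 < xstar i)
    (hz : 0 ≤ z) (hzx : z ≤ xstar) (hzf : z ≤ f z) :
    Tendsto (fun n => f^[n] z) atTop (𝓝 xstar) := by
  have hmono : Monotone fun n => f^[n] z := monotone_nat_of_le_succ fun n => by
    rw [iterate_succ_apply]
    exact hf.iterate_mono hz hzf n
  have habove : ∀ n, f^[n] z ≤ xstar := fun n =>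
    (hf.iterate_mono hz hzx n).trans (hfix.iterate n).le
  have hlim := tendsto_atTop_ciSup hmono ⟨xstar, Set.forall_mem_range.2 habove⟩
  have hyx : ⨆ n, f^[n] z ≤ xstar := ciSup_le habove
  have hypos : ∀ i, 0 < (⨆ n, f^[n] z) i := fun i =>
    (hf.pos z hz i).trans_le (hmono.ge_of_tendsto hlim 1 i)
  have hxy : xstar ≤ ⨆ n, f^[n] z :=
    hf.le_of_le_map_of_map_le (fun i => (hxstar i).le) hfix.ge hypos
      (hf.map_le_of_tendsto_iterate hz hypos hlim (hmono.ge_of_tendsto hlim))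
  rwa [le_antisymm hyx hxy] at hlim

theorem tendsto_iterate [Fintype ι] (hf : IsStandardInterference f) {xstar x : ι → ℝ}
    (hfix : IsFixedPt f xstar) (hxstar : ∀ i, 0 < xstar i) (hx : 0 ≤ x) :
    Tendsto (fun n => f^[n] x) atTop (𝓝 xstar) := by
  have hxstar0 : 0 ≤ xstar := fun i => (hxstar i).le
  obtain ⟨A, hA, hxA⟩ := exists_one_lt_le_smul x hxstar
  have hupper := hf.tendsto_iterate_of_le_of_map_le hfix hxstar
    (le_smul_of_one_le_left hxstar0 hA.le)
    ((hf.map_smul_le hA hxstar0).trans_eq (congrArg (A • ·) hfix))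
  have hlower := hf.tendsto_iterate_of_le_of_le_map hfix hxstar le_rfl hxstar0
    (hf.map_nonneg le_rfl)
  refine tendsto_pi_nhds.2 fun i => ?_
  exact tendsto_of_tendsto_of_tendsto_of_le_of_le (tendsto_pi_nhds.1 hlower i)
    (tendsto_pi_nhds.1 hupper i) (fun n => hf.iterate_mono le_rfl hx n i)
    (fun n => hf.iterate_mono hx hxA n i)

end IsStandardInterference

/-- If a standard interference function possesses a fixed point `x*`
(in the positive orthant), then from every initial point `x⁽¹⁾ ∈ ℝ₊ᵏ` the iteration
`x⁽ⁿ⁺¹⁾ = f(x⁽ⁿ⁾)` converges to `x*`. -/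
theorem sif_iteration_converges (k : ℕ) (f : (Fin k → ℝ) → (Fin k → ℝ))
    (hpos : ∀ x : Fin k → ℝ, (∀ i, 0 ≤ x i) → ∀ i, 0 < f x i)
    (hmono : ∀ x y : Fin k → ℝ, (∀ i, 0 ≤ x i) → x ≤ y → f x ≤ f y)
    (hscale : ∀ α : ℝ, 1 < α → ∀ x : Fin k → ℝ, (∀ i, 0 ≤ x i) →
      ∀ i, f (α • x) i < α * f x i)
    (xstar : Fin k → ℝ) (hxstar_pos : ∀ i, 0 < xstar i) (hfix : xstar = f xstar) :
    ∀ x1 : Fin k → ℝ, (∀ i, 0 ≤ x1 i) →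
      Filter.Tendsto (fun n => f^[n] x1) Filter.atTop (nhds xstar) := fun _ hx1 =>
  IsStandardInterference.tendsto_iterate ⟨hpos, hmono, hscale⟩ hfix.symm hxstar_pos hx1
end

section
/- Let f : ℝ₊ᵏ → ℝ₊₊ᵏ be a standard interference function and consider the sequence x⁽ⁿ⁺¹⁾ = f(x⁽ⁿ⁾). If x⁽¹⁾ = 0, the sequence is monotonically increasing in each component; if instead x⁽¹⁾ satisfies f(x⁽¹⁾) ≤ x⁽¹⁾ componentwise, the sequence is monotonically decreasing in each component. -/
open Set

namespace MonotoneOn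

variable {α : Type*} [Preorder α] {f : α → α} {s : Set α} {x : α}

theorem monotone_iterate_of_le_map (hf : MonotoneOn f s) (hs : MapsTo f s s) (hx : x ∈ s)
    (hfx : x ≤ f x) : Monotone fun n => f^[n] x := by
  have hg : Monotone (hs.restrict f s s) := fun a b hab => hf a.2 b.2 hab
  have hgx : Monotone fun n => (hs.restrict f s s)^[n] ⟨x, hx⟩ :=
    hg.monotone_iterate_of_le_map hfx
  simpa only [Function.comp_def, hs.coe_iterate_restrict] using
    (Subtype.mono_coe (· ∈ s)).comp hgx

theorem antitone_iterate_of_map_le (hf : MonotoneOn f s) (hs : MapsTo f s s) (hx : x ∈ s)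
    (hfx : f x ≤ x) : Antitone fun n => f^[n] x :=
  hf.dual.monotone_iterate_of_le_map hs hx hfx

end MonotoneOn

theorem sif_iteration_monotone_general (k : ℕ) (f : (Fin k → ℝ) → (Fin k → ℝ))
    (hpos : ∀ x : Fin k → ℝ, (∀ i, 0 ≤ x i) → ∀ i, 0 < f x i)
    (hmono : ∀ x y : Fin k → ℝ, (∀ i, 0 ≤ x i) → x ≤ y → f x ≤ f y) :
    ∀ x1 : Fin k → ℝ, (∀ i, 0 ≤ x1 i) →
      ((x1 = 0 → ∀ n : ℕ, ∀ i, f^[n] x1 i ≤ f^[n + 1] x1 i) ∧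
       (f x1 ≤ x1 → ∀ n : ℕ, ∀ i, f^[n + 1] x1 i ≤ f^[n] x1 i)) := by
  intro x1 hx1
  let orthant : Set (Fin k → ℝ) := {x | ∀ i, 0 ≤ x i}
  have hmaps : MapsTo f orthant orthant := fun x hx i => (hpos x hx i).le
  have hmonoOn : MonotoneOn f orthant := fun x hx y _ hxy => hmono x y hx hxy
  constructor
  · rintro rfl n
    have hle : (0 : Fin k → ℝ) ≤ f 0 := fun i => (hpos 0 (fun _ => le_rfl) i).le
    exact hmonoOn.monotone_iterate_of_le_map hmaps hx1 hle n.le_succ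
  · intro hle n
    exact hmonoOn.antitone_iterate_of_map_le hmaps hx1 hle n.le_succ

/-- For a standard interference function the iteration
`x⁽ⁿ⁺¹⁾ = f(x⁽ⁿ⁾)` is componentwise monotonically increasing when started at `0`,
and componentwise monotonically decreasing when started at a point `x⁽¹⁾` with
`f(x⁽¹⁾) ≤ x⁽¹⁾`. -/
theorem sif_iteration_monotone (k : ℕ) (f : (Fin k → ℝ) → (Fin k → ℝ))
    (hpos : ∀ x : Fin k → ℝ, (∀ i, 0 ≤ x i) → ∀ i, 0 < f x i)
    (hmono : ∀ x y : Fin k → ℝ, (∀ i, 0 ≤ x i) → x ≤ y → f x ≤ f y)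
    (hscale : ∀ α : ℝ, 1 < α → ∀ x : Fin k → ℝ, (∀ i, 0 ≤ x i) →
      ∀ i, f (α • x) i < α * f x i) :
    ∀ x1 : Fin k → ℝ, (∀ i, 0 ≤ x1 i) →
      ((x1 = 0 → ∀ n : ℕ, ∀ i, f^[n] x1 i ≤ f^[n + 1] x1 i) ∧
       (f x1 ≤ x1 → ∀ n : ℕ, ∀ i, f^[n + 1] x1 i ≤ f^[n] x1 i)) :=
  sif_iteration_monotone_general k f hpos hmono
end

section
/- The function h : (0,∞) → ℝ defined by h(x) = 1 / log₂(1 + 1/x) is concave on (0,∞). -/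
/-!
For `x > 0`, `1 / log₂ (1 + 1/x) = log 2 / g x` with `g x = log (x + 1) - log x`. For a positive
`C²` function `g`, `(1/g)'' = (2 g'² - g g'') / g³`, so `1/g` is concave as soon as
`2 g'² ≤ g g''`. Here `g' = -1/(x(x+1))` and `g'' = (2x+1)/(x(x+1))²`, so the condition reads
`2 ≤ (2x+1) log (1 + 1/x)`, which is the first term of the series
`log (1 + 1/x) = ∑ 2 / ((2k+1) (2x+1)^(2k+1))`.
-/

open Set Real

theorem two_div_two_mul_add_one_le_log_one_add_inv {x : ℝ} (hx : 0 < x) :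
    2 / (2 * x + 1) ≤ log (1 + x⁻¹) := by
  simpa [div_eq_mul_inv] using le_hasSum (hasSum_log_one_add_inv hx) 0 fun k _ => by positivity

theorem log_one_add_inv {x : ℝ} (hx : 0 < x) : log (1 + x⁻¹) = log (x + 1) - log x := by
  rw [← log_div (by positivity) hx.ne']
  congr 1
  field_simp

theorem concaveOn_inv_of_two_mul_deriv_sq_le {D : Set ℝ} (hD : Convex ℝ D) (hD' : IsOpen D)
    {g g' g'' : ℝ → ℝ} (hg : ∀ x ∈ D, 0 < g x) (hg' : ∀ x ∈ D, HasDerivAt g (g' x) x)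
    (hg'' : ∀ x ∈ D, HasDerivAt g' (g'' x) x) (h : ∀ x ∈ D, 2 * g' x ^ 2 ≤ g x * g'' x) :
    ConcaveOn ℝ D fun x => (g x)⁻¹ := by
  have hderiv : ∀ x ∈ D, HasDerivAt (fun x => (g x)⁻¹) (-g' x / g x ^ 2) x := fun x hx =>
    (hg' x hx).inv (hg x hx).ne'
  have hderiv2 : ∀ x ∈ D, HasDerivAt (fun x => -g' x / g x ^ 2)
      ((2 * g' x ^ 2 - g x * g'' x) / g x ^ 3) x := by
    intro x hx
    have hgx := (hg x hx).ne'
    refine ((hg'' x hx).fun_neg.fun_div ((hg' x hx).fun_pow 2) (pow_ne_zero 2 hgx)).congr_deriv ?_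
    field_simp
    ring
  refine concaveOn_of_hasDerivWithinAt2_nonpos hD (f' := fun x => -g' x / g x ^ 2)
    (f'' := fun x => (2 * g' x ^ 2 - g x * g'' x) / g x ^ 3)
    (fun x hx => (hderiv x hx).continuousAt.continuousWithinAt) ?_ ?_ ?_ <;> rw [hD'.interior_eq]
  · exact fun x hx => (hderiv x hx).hasDerivWithinAt
  · exact fun x hx => (hderiv2 x hx).hasDerivWithinAt
  · intro x hx
    have := hg x hx
    exact div_nonpos_of_nonpos_of_nonneg (sub_nonpos.2 (h x hx)) (by positivity)

theorem concaveOn_inv_log_add_one_sub_log :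
    ConcaveOn ℝ (Ioi 0) fun x => (log (x + 1) - log x)⁻¹ := by
  refine concaveOn_inv_of_two_mul_deriv_sq_le (convex_Ioi 0) isOpen_Ioi
    (g' := fun x => (x + 1)⁻¹ - x⁻¹) (g'' := fun x => (x ^ 2)⁻¹ - ((x + 1) ^ 2)⁻¹)
    (fun x hx => ?_) (fun x hx => ?_) (fun x hx => ?_) fun x hx => ?_
  all_goals have hx : 0 < x := hx
  · rw [← log_one_add_inv hx]
    exact log_pos (by simpa using hx)
  · simpa using (((hasDerivAt_id x).add_const 1).log (by positivity)).fun_sub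
      (hasDerivAt_log hx.ne')
  · refine ((((hasDerivAt_id' x).add_const 1).fun_inv (by positivity)).fun_sub
      (hasDerivAt_inv hx.ne')).congr_deriv ?_
    field_simp
    ring
  · have key := two_div_two_mul_add_one_le_log_one_add_inv hx
    rw [log_one_add_inv hx, div_le_iff₀ (by positivity)] at key
    have hlhs : 2 * ((x + 1)⁻¹ - x⁻¹) ^ 2 = 2 / (x * (x + 1)) ^ 2 := by field_simp; ring
    have hrhs : (log (x + 1) - log x) * ((x ^ 2)⁻¹ - ((x + 1) ^ 2)⁻¹)
        = (log (x + 1) - log x) * (2 * x + 1) / (x * (x + 1)) ^ 2 := by field_simp; ring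
    rw [hlhs, hrhs]
    gcongr

/-- The function `h(x) = 1 / log₂(1 + 1/x)` is concave on `(0, ∞)`. -/
theorem concave_inv_logb_one_add_inv :
    ConcaveOn ℝ (Set.Ioi (0 : ℝ)) (fun x : ℝ => 1 / Real.logb 2 (1 + 1 / x)) := by
  refine (concaveOn_inv_log_add_one_sub_log.smul (log_nonneg one_le_two)).congr fun x hx => ?_
  simp [logb, ← log_one_add_inv hx, div_eq_mul_inv]
end

section
/- Let f : ℝ₊ᵏ → ℝᵏ be componentwise concave on the nonnegative orthant and positive-valued (f(x) > 0 componentwise for all x ∈ ℝ₊ᵏ). Then f is a standard interference function, i.e., f is monotone (x ≤ y componentwise implies f(x) ≤ f(y) componentwise) and scalable (for every α > 1 and every x ∈ ℝ₊ᵏ, α·f(x) > f(α·x) componentwise). -/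
/-!
Restricted to a ray `t ↦ x + t • v` in the orthant, a concave function that is bounded below
(here by `0`) cannot decrease: a drop of `d > 0` from `t = 0` to `t = 1` would force a drop of
at least `t * d` at time `t`. Scalability is concavity on the segment from `0` to `α • x`,
where the strict inequality comes from `f 0 > 0`.
-/

section Concave

variable {E : Type*} [AddCommGroup E] [Module ℝ E] {s : Set E} {g : E → ℝ}

theorem ConcaveOn.mul_sub_map_add_smul_le {b : ℝ} (hg : ConcaveOn ℝ s g) (hb : ∀ z ∈ s, b ≤ g z)
    {x v : E} (hx : x ∈ s) {t : ℝ} (ht : 1 ≤ t) (hxt : x + t • v ∈ s) :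
    t * (g x - g (x + v)) ≤ g x - b := by
  have ht0 : 0 < t := by linarith
  have hsegment : (1 - t⁻¹) • x + t⁻¹ • (x + t • v) = x + v := by
    rw [smul_add, smul_smul, inv_mul_cancel₀ ht0.ne', one_smul, sub_smul, one_smul]
    abel
  have hconc := hg.2 hx hxt (sub_nonneg.2 (inv_le_one_of_one_le₀ ht)) (inv_nonneg.2 ht0.le)
    (sub_add_cancel 1 t⁻¹)
  rw [hsegment, smul_eq_mul, smul_eq_mul] at hconc
  have hbound : (1 - t⁻¹) * g x + t⁻¹ * b ≤ g (x + v) := by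
    linarith [mul_le_mul_of_nonneg_left (hb _ hxt) (inv_nonneg.2 ht0.le)]
  have hexpand : t * ((1 - t⁻¹) * g x + t⁻¹ * b) = t * g x - g x + b := by field_simp
  linarith [mul_le_mul_of_nonneg_left hbound ht0.le]

theorem ConcaveOn.le_map_add_of_bddBelow {b : ℝ} (hg : ConcaveOn ℝ s g)
    (hb : ∀ z ∈ s, b ≤ g z) {x v : E} (hray : ∀ t : ℝ, 0 ≤ t → x + t • v ∈ s) :
    g x ≤ g (x + v) := by
  have hx : x ∈ s := by simpa using hray 0 le_rfl
  by_contra! hdrop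
  set d := g x - g (x + v)
  have hd : 0 < d := sub_pos.2 hdrop
  have hgb : 0 ≤ g x - b := sub_nonneg.2 (hb x hx)
  -- at time `t = (g x - b) / d + 1` the drop `t * d` exceeds `g x - b`
  have ht : 1 ≤ (g x - b) / d + 1 := le_add_of_nonneg_left (div_nonneg hgb hd.le)
  have := hg.mul_sub_map_add_smul_le hb hx ht (hray _ (by linarith))
  rw [add_mul, div_mul_cancel₀ _ hd.ne'] at this
  linarith

theorem ConcaveOn.mul_map_lt_map_smul (hg : ConcaveOn ℝ s g) (h0 : (0 : E) ∈ s) (hg0 : 0 < g 0)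
    {y : E} (hy : y ∈ s) {t : ℝ} (ht0 : 0 < t) (ht1 : t < 1) :
    t * g y < g (t • y) := by
  have hconc := hg.2 hy h0 ht0.le (sub_nonneg.2 ht1.le) (add_sub_cancel t 1)
  rw [smul_zero, add_zero, smul_eq_mul, smul_eq_mul] at hconc
  linarith [mul_pos (sub_pos.2 ht1) hg0]

end Concave

/-- A componentwise concave, positive-valued function on the nonnegative
orthant is a standard interference function, i.e., it is monotone and scalable. -/
theorem positive_concave_is_sif (k : ℕ) (f : (Fin k → ℝ) → (Fin k → ℝ))
    (hconc : ∀ l, ConcaveOn ℝ {x : Fin k → ℝ | ∀ i, 0 ≤ x i} (fun x => f x l))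
    (hpos : ∀ x : Fin k → ℝ, (∀ i, 0 ≤ x i) → ∀ l, 0 < f x l) :
    (∀ x y : Fin k → ℝ, (∀ i, 0 ≤ x i) → x ≤ y → f x ≤ f y) ∧
    (∀ α : ℝ, 1 < α → ∀ x : Fin k → ℝ, (∀ i, 0 ≤ x i) →
      ∀ l, f (α • x) l < α * f x l) := by
  refine ⟨fun x y hx hxy l => ?_, fun α hα x hx l => ?_⟩
  · have hray : ∀ t : ℝ, 0 ≤ t → ∀ i, 0 ≤ (x + t • (y - x)) i := fun t ht i => by
      simpa using add_nonneg (hx i) (mul_nonneg ht (sub_nonneg.2 (hxy i)))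
    simpa using (hconc l).le_map_add_of_bddBelow (fun z hz => (hpos z hz l).le) hray
  · have hα0 : 0 < α := by linarith
    have hαx : ∀ i, 0 ≤ (α • x) i := fun i => mul_nonneg hα0.le (hx i)
    have := (hconc l).mul_map_lt_map_smul (fun _ => le_rfl) (hpos 0 (fun _ => le_rfl) l) hαx
      (inv_pos.2 hα0) (inv_lt_one_of_one_lt₀ hα)
    rwa [inv_smul_smul₀ hα0.ne', inv_mul_lt_iff₀ hα0] at this
end

section
/- Let g : ℝ₊₊ᵏ → ℝ₊₊ be monotone (x ≤ y componentwise implies g(x) ≤ g(y)) and homogeneous of degree 1 (g(αx) = α·g(x) for all α > 0 and x ∈ ℝ₊₊ᵏ), and define h : ℝ₊₊ᵏ → ℝ₊₊ᵏ by h(x) = x / g(x). Then h is nonexpansive with respect to the metric μ_s, i.e., μ_s(h(x), h(y)) ≤ μ_s(x, y) for all x, y ∈ ℝ₊₊ᵏ. -/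
/-- The metric `μ_s(x, y) = max_i (log (x i / y i))⁺ + max_i (log (y i / x i))⁺`
on the positive orthant. -/
noncomputable def muS {k : ℕ} (x y : Fin k → ℝ) : ℝ :=
  (⨆ i : Fin k, max (Real.log (x i / y i)) 0) +
    (⨆ i : Fin k, max (Real.log (y i / x i)) 0)

/-!
Write `μ_s(x, y) = M + m` with `M = maxᵢ (log (xᵢ/yᵢ))⁺` and `m = maxᵢ (log (yᵢ/xᵢ))⁺`.
Since `x ≤ e^M y` and `y ≤ e^m x`, monotonicity and homogeneity of `g` give
`-M ≤ c ≤ m` for `c = log (g y / g x)`. Normalizing shifts every `log (xᵢ/yᵢ)` by `c`,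
so the two halves of `μ_s(h x, h y)` are at most `M + c` and `m - c`, both nonnegative.
-/

open Real

noncomputable def logRatioSup {ι : Type*} (x y : ι → ℝ) : ℝ :=
  ⨆ i, max (log (x i / y i)) 0

theorem muS_eq_logRatioSup_add {k : ℕ} (x y : Fin k → ℝ) :
    muS x y = logRatioSup x y + logRatioSup y x :=
  rfl

section LogRatioSup

variable {ι : Type*} [Finite ι]

theorem log_div_le_logRatioSup (x y : ι → ℝ) (i : ι) :
    log (x i / y i) ≤ logRatioSup x y :=
  (le_max_left _ 0).trans <|
    le_ciSup (f := fun i => max (log (x i / y i)) 0) (Finite.bddAbove_range _) i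

theorem le_exp_logRatioSup_smul {x y : ι → ℝ} (hx : ∀ i, 0 < x i) (hy : ∀ i, 0 < y i) :
    x ≤ exp (logRatioSup x y) • y := fun i => by
  have hratio : x i / y i ≤ exp (logRatioSup x y) :=
    (log_le_iff_le_exp (div_pos (hx i) (hy i))).mp (log_div_le_logRatioSup x y i)
  simpa only [Pi.smul_apply, smul_eq_mul] using (div_le_iff₀ (hy i)).mp hratio

theorem logRatioSup_smul_smul_le {x y : ι → ℝ} {a b : ℝ} (hx : ∀ i, x i ≠ 0)
    (hy : ∀ i, y i ≠ 0) (ha : a ≠ 0) (hb : b ≠ 0)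
    (hnonneg : 0 ≤ logRatioSup x y + log (a / b)) :
    logRatioSup (a • x) (b • y) ≤ logRatioSup x y + log (a / b) := by
  refine Real.iSup_le (fun i => max_le ?_ hnonneg) hnonneg
  have hshift : log ((a • x) i / (b • y) i) = log (x i / y i) + log (a / b) := by
    rw [Pi.smul_apply, Pi.smul_apply, smul_eq_mul, smul_eq_mul, mul_div_mul_comm, mul_comm,
      log_mul (div_ne_zero (hx i) (hy i)) (div_ne_zero ha hb)]
  linarith [log_div_le_logRatioSup x y i]

theorem log_div_le_logRatioSup_of_monotone_homogeneous {g : (ι → ℝ) → ℝ}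
    (hgpos : ∀ x : ι → ℝ, (∀ i, 0 < x i) → 0 < g x)
    (hgmono : ∀ x y : ι → ℝ, (∀ i, 0 < x i) → (∀ i, 0 < y i) → x ≤ y → g x ≤ g y)
    (hghom : ∀ α : ℝ, 0 < α → ∀ x : ι → ℝ, (∀ i, 0 < x i) → g (α • x) = α * g x)
    {x y : ι → ℝ} (hx : ∀ i, 0 < x i) (hy : ∀ i, 0 < y i) :
    log (g x / g y) ≤ logRatioSup x y := by
  have hscaled_pos : ∀ i, 0 < (exp (logRatioSup x y) • y) i := fun i =>
    mul_pos (exp_pos _) (hy i)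
  have hgxy : g x ≤ exp (logRatioSup x y) * g y := by
    rw [← hghom _ (exp_pos _) y hy]
    exact hgmono _ _ hx hscaled_pos (le_exp_logRatioSup_smul hx hy)
  rw [log_le_iff_le_exp (div_pos (hgpos x hx) (hgpos y hy)), div_le_iff₀ (hgpos y hy)]
  exact hgxy

end LogRatioSup

/-- If `g : ℝ₊₊ᵏ → ℝ₊₊` is monotone and homogeneous of degree 1, then
`h(x) = x / g(x)` is nonexpansive with respect to the metric `μ_s`. -/
theorem normalization_nonexpansive (k : ℕ) (g : (Fin k → ℝ) → ℝ)
    (hgpos : ∀ x : Fin k → ℝ, (∀ i, 0 < x i) → 0 < g x)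
    (hgmono : ∀ x y : Fin k → ℝ, (∀ i, 0 < x i) → (∀ i, 0 < y i) → x ≤ y → g x ≤ g y)
    (hghom : ∀ α : ℝ, 0 < α → ∀ x : Fin k → ℝ, (∀ i, 0 < x i) → g (α • x) = α * g x) :
    ∀ x y : Fin k → ℝ, (∀ i, 0 < x i) → (∀ i, 0 < y i) →
      muS ((g x)⁻¹ • x) ((g y)⁻¹ • y) ≤ muS x y := by
  intro x y hx hy
  have hx₀ : ∀ i, x i ≠ 0 := fun i => (hx i).ne'
  have hy₀ : ∀ i, y i ≠ 0 := fun i => (hy i).ne'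
  have hgx := inv_ne_zero (hgpos x hx).ne'
  have hgy := inv_ne_zero (hgpos y hy).ne'
  have hyx_le : log (g y / g x) ≤ logRatioSup y x :=
    log_div_le_logRatioSup_of_monotone_homogeneous hgpos hgmono hghom hy hx
  have hxy_le : log (g x / g y) ≤ logRatioSup x y :=
    log_div_le_logRatioSup_of_monotone_homogeneous hgpos hgmono hghom hx hy
  have hlog_symm : log (g x / g y) = -log (g y / g x) := by rw [← log_inv, inv_div]
  have hxy := logRatioSup_smul_smul_le hx₀ hy₀ hgx hgy (by rw [inv_div_inv]; linarith)
  have hyx := logRatioSup_smul_smul_le hy₀ hx₀ hgy hgx (by rw [inv_div_inv]; linarith)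
  rw [inv_div_inv] at hxy hyx
  rw [muS_eq_logRatioSup_add, muS_eq_logRatioSup_add]
  linarith
end

section
/- For every fixed power vector p' ∈ ℝ₊₊^{2K}, the function f_{p'} : ℝ₊^{2K} → ℝ₊₊^{2K}, whose l-th component is f_{p',l}(w) = d_l / (W₀ B log₂(1 + SINR_l(p', w))), is a standard interference function: it is positive-valued, monotone (w ≤ w̃ componentwise implies f_{p'}(w) ≤ f_{p'}(w̃) componentwise), and scalable (for every α > 1 and every w ∈ ℝ₊^{2K}, α·f_{p'}(w) > f_{p'}(α·w) componentwise). -/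
/-!
`f_{p',l}` is the composite of the interference `w ↦ I_l(p', w)` with
`x ↦ d_l / (W₀ B log₂(1 + p'_l / x))`. The interference is affine in `w` with a positive
offset `σ²/v_l`, hence positive, monotone and strictly subhomogeneous: `I(αw) < α I(w)`.
The outer map is increasing and subhomogeneous, `φ(αx) ≤ α φ(x)` for `α ≥ 1`, which after
putting `s = p'_l / x` is Bernoulli's inequality `1 + s ≤ (1 + s/α)^α` under `log₂`.
-/

open Real Set

/-- Interference at link `l`: `I_l(p, w) = ((Ṽ · diag(p) · w)_l + σ²) / v_l`. -/
noncomputable def interf {K : ℕ} (V : Matrix (Fin (2 * K)) (Fin (2 * K)) ℝ)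
    (v : Fin (2 * K) → ℝ) (σ2 : ℝ) (p w : Fin (2 * K) → ℝ) (l : Fin (2 * K)) : ℝ :=
  ((∑ j, V l j * (p j * w j)) + σ2) / v l

/-- `f_l(p, w) = d_l / (W₀ B log₂(1 + SINR_l(p, w)))` with `SINR_l = p_l / I_l(p, w)`. -/
noncomputable def rateF {K : ℕ} (V : Matrix (Fin (2 * K)) (Fin (2 * K)) ℝ)
    (v : Fin (2 * K) → ℝ) (σ2 W0 B : ℝ) (d : Fin (2 * K) → ℝ)
    (p w : Fin (2 * K) → ℝ) (l : Fin (2 * K)) : ℝ :=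
  d l / (W0 * B * Real.logb 2 (1 + p l / interf V v σ2 p w l))

theorem Real.logb_one_add_le_mul_logb_one_add_div {b α s : ℝ} (hb : 1 < b) (hα : 1 ≤ α)
    (hs : -1 < s) : logb b (1 + s) ≤ α * logb b (1 + s / α) := by
  have hα₀ : 0 < α := by linarith
  have hsα : -1 < s / α := by
    rw [lt_div_iff₀ hα₀]; nlinarith
  have bernoulli : 1 + s ≤ (1 + s / α) ^ α := by
    simpa [mul_div_cancel₀ s hα₀.ne'] using one_add_mul_self_le_rpow_one_add hsα.le hα
  calc logb b (1 + s) ≤ logb b ((1 + s / α) ^ α) := logb_le_logb_of_le hb (by linarith) bernoulli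
    _ = α * logb b (1 + s / α) := logb_rpow_eq_mul_logb_of_pos (by linarith)

noncomputable def demandFraction (c d p x : ℝ) : ℝ := d / (c * logb 2 (1 + p / x))

section DemandFraction
variable {c d p : ℝ}

theorem demandFraction_pos (hc : 0 < c) (hd : 0 < d) (hp : 0 < p) {x : ℝ} (hx : 0 < x) :
    0 < demandFraction c d p x := by
  unfold demandFraction
  have : 0 < logb 2 (1 + p / x) := logb_pos one_lt_two (by simp; positivity)
  positivity

theorem demandFraction_strictMonoOn (hc : 0 < c) (hd : 0 < d) (hp : 0 < p) :
    StrictMonoOn (demandFraction c d p) (Ioi 0) := by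
  rintro x (hx : 0 < x) y (hy : 0 < y) hxy
  have hsinr : p / y < p / x := div_lt_div_of_pos_left hp hx hxy
  have hrate : logb 2 (1 + p / y) < logb 2 (1 + p / x) :=
    logb_lt_logb one_lt_two (by positivity) (by linarith)
  have hrate_pos : 0 < logb 2 (1 + p / y) := logb_pos one_lt_two (by simp; positivity)
  exact div_lt_div_of_pos_left hd (by positivity) (mul_lt_mul_of_pos_left hrate hc)

theorem demandFraction_mul_le (hc : 0 < c) (hd : 0 < d) (hp : 0 < p) {α x : ℝ}
    (hα : 1 ≤ α) (hx : 0 < x) :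
    demandFraction c d p (α * x) ≤ α * demandFraction c d p x := by
  have hα₀ : 0 < α := by linarith
  have hsinr : p / (α * x) = p / x / α := by rw [mul_comm, div_div]
  have hsinr_pos : 0 < p / x := by positivity
  have hrate := logb_one_add_le_mul_logb_one_add_div one_lt_two hα (by linarith : -1 < p / x)
  have hrate_pos : 0 < logb 2 (1 + p / x) := logb_pos one_lt_two (by simp; positivity)
  unfold demandFraction
  rw [hsinr, show α * (d / (c * logb 2 (1 + p / x))) = d / (c * (logb 2 (1 + p / x) / α)) by
    field_simp]
  refine div_le_div_of_nonneg_left hd.le (by positivity) (mul_le_mul_of_nonneg_left ?_ hc.le)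
  rwa [div_le_iff₀' hα₀]

end DemandFraction

section Interference
variable {K : ℕ} {V : Matrix (Fin (2 * K)) (Fin (2 * K)) ℝ} {v : Fin (2 * K) → ℝ} {σ2 : ℝ}
  {p : Fin (2 * K) → ℝ}

theorem interf_pos (hV : ∀ i j, 0 ≤ V i j) (hv : ∀ i, 0 < v i) (hσ2 : 0 < σ2)
    (hp : ∀ i, 0 ≤ p i) (w : Fin (2 * K) → ℝ) (hw : ∀ i, 0 ≤ w i) (l : Fin (2 * K)) :
    0 < interf V v σ2 p w l := by
  have : 0 ≤ ∑ j, V l j * (p j * w j) :=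
    Finset.sum_nonneg fun j _ => mul_nonneg (hV l j) (mul_nonneg (hp j) (hw j))
  exact div_pos (by linarith) (hv l)

theorem interf_mono (hV : ∀ i j, 0 ≤ V i j) (hv : ∀ i, 0 < v i) (hp : ∀ i, 0 ≤ p i)
    {w w₂ : Fin (2 * K) → ℝ} (hle : w ≤ w₂) (l : Fin (2 * K)) :
    interf V v σ2 p w l ≤ interf V v σ2 p w₂ l := by
  have : ∑ j, V l j * (p j * w j) ≤ ∑ j, V l j * (p j * w₂ j) :=
    Finset.sum_le_sum fun j _ => by gcongr; exacts [hV l j, hp j, hle j]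
  exact div_le_div_of_nonneg_right (by linarith) (hv l).le

theorem interf_smul_lt (hv : ∀ i, 0 < v i) (hσ2 : 0 < σ2) {α : ℝ} (hα : 1 < α)
    (w : Fin (2 * K) → ℝ) (l : Fin (2 * K)) :
    interf V v σ2 p (α • w) l < α * interf V v σ2 p w l := by
  have hsum : ∑ j, V l j * (p j * (α • w) j) = α * ∑ j, V l j * (p j * w j) := by
    rw [Finset.mul_sum]
    exact Finset.sum_congr rfl fun j _ => by simp only [Pi.smul_apply, smul_eq_mul]; ring
  rw [interf, interf, hsum, ← mul_div_assoc]
  exact div_lt_div_of_pos_right (by nlinarith) (hv l)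

end Interference

theorem rateF_eq_demandFraction {K : ℕ} (V : Matrix (Fin (2 * K)) (Fin (2 * K)) ℝ)
    (v : Fin (2 * K) → ℝ) (σ2 W0 B : ℝ) (d p w : Fin (2 * K) → ℝ) (l : Fin (2 * K)) :
    rateF V v σ2 W0 B d p w l = demandFraction (W0 * B) (d l) (p l) (interf V v σ2 p w l) :=
  rfl

theorem rateF_is_sif_general (K : ℕ)
    (V : Matrix (Fin (2 * K)) (Fin (2 * K)) ℝ) (hV : ∀ i j, 0 ≤ V i j)
    (v : Fin (2 * K) → ℝ) (hv : ∀ i, 0 < v i)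
    (σ2 : ℝ) (hσ2 : 0 < σ2) (W0 B : ℝ) (hW0 : 0 < W0) (hB : 0 < B)
    (d : Fin (2 * K) → ℝ) (hd : ∀ i, 0 < d i)
    (p' : Fin (2 * K) → ℝ) (hp' : ∀ i, 0 < p' i) :
    (∀ w : Fin (2 * K) → ℝ, (∀ i, 0 ≤ w i) → ∀ l, 0 < rateF V v σ2 W0 B d p' w l) ∧
    (∀ w w2 : Fin (2 * K) → ℝ, (∀ i, 0 ≤ w i) → w ≤ w2 →
      ∀ l, rateF V v σ2 W0 B d p' w l ≤ rateF V v σ2 W0 B d p' w2 l) ∧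
    (∀ α : ℝ, 1 < α → ∀ w : Fin (2 * K) → ℝ, (∀ i, 0 ≤ w i) →
      ∀ l, rateF V v σ2 W0 B d p' (α • w) l < α * rateF V v σ2 W0 B d p' w l) := by
  have hc : 0 < W0 * B := mul_pos hW0 hB
  have hp : ∀ i, 0 ≤ p' i := fun i => (hp' i).le
  have hI := interf_pos hV hv hσ2 hp
  simp only [rateF_eq_demandFraction]
  refine ⟨fun w hw l => demandFraction_pos hc (hd l) (hp' l) (hI w hw l), ?_, ?_⟩
  · intro w w₂ hw hle l
    have hw₂ : ∀ i, 0 ≤ w₂ i := fun i => (hw i).trans (hle i)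
    exact (demandFraction_strictMonoOn hc (hd l) (hp' l)).monotoneOn (hI w hw l) (hI w₂ hw₂ l)
      (interf_mono hV hv hp hle l)
  · intro α hα w hw l
    have hαw : ∀ i, 0 ≤ (α • w) i := fun i => mul_nonneg (by linarith) (hw i)
    calc demandFraction (W0 * B) (d l) (p' l) (interf V v σ2 p' (α • w) l)
        < demandFraction (W0 * B) (d l) (p' l) (α * interf V v σ2 p' w l) :=
          demandFraction_strictMonoOn hc (hd l) (hp' l) (hI (α • w) hαw l)
            (mul_pos (by linarith) (hI w hw l)) (interf_smul_lt hv hσ2 hα w l)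
      _ ≤ α * demandFraction (W0 * B) (d l) (p' l) (interf V v σ2 p' w l) :=
          demandFraction_mul_le hc (hd l) (hp' l) hα.le (hI w hw l)

/-- Lemma 1 of the paper: For every fixed positive power vector `p'`,
the function `w ↦ f_{p'}(w)` is a standard interference function: positive-valued,
monotone, and scalable on the nonnegative orthant. -/
theorem rateF_is_sif (K : ℕ) (hK : 1 ≤ K)
    (V : Matrix (Fin (2 * K)) (Fin (2 * K)) ℝ) (hV : ∀ i j, 0 ≤ V i j)
    (v : Fin (2 * K) → ℝ) (hv : ∀ i, 0 < v i)
    (σ2 : ℝ) (hσ2 : 0 < σ2) (W0 B : ℝ) (hW0 : 0 < W0) (hB : 0 < B)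
    (d : Fin (2 * K) → ℝ) (hd : ∀ i, 0 < d i)
    (p' : Fin (2 * K) → ℝ) (hp' : ∀ i, 0 < p' i) :
    (∀ w : Fin (2 * K) → ℝ, (∀ i, 0 ≤ w i) → ∀ l, 0 < rateF V v σ2 W0 B d p' w l) ∧
    (∀ w w2 : Fin (2 * K) → ℝ, (∀ i, 0 ≤ w i) → w ≤ w2 →
      ∀ l, rateF V v σ2 W0 B d p' w l ≤ rateF V v σ2 W0 B d p' w2 l) ∧
    (∀ α : ℝ, 1 < α → ∀ w : Fin (2 * K) → ℝ, (∀ i, 0 ≤ w i) →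
      ∀ l, rateF V v σ2 W0 B d p' (α • w) l < α * rateF V v σ2 W0 B d p' w l) :=
  rateF_is_sif_general K V hV v hv σ2 hσ2 W0 B hW0 hB d hd p' hp'
end

section
/- Let f : ℝ₊ᵏ → ℝ₊₊ᵏ be a standard interference function. Then for every p ∈ ℝ₊₊ᵏ and every α > 1, min_{l=1,…,k} (α·p_l)/f_l(α·p) > min_{l=1,…,k} p_l/f_l(p). -/
theorem ciInf_lt_ciInf_of_forall_lt {ι α : Type*} [Finite ι] [Nonempty ι]
    [ConditionallyCompleteLinearOrder α] {f g : ι → α} (h : ∀ i, f i < g i) :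
    ⨅ i, f i < ⨅ i, g i := by
  obtain ⟨i, hi⟩ := exists_eq_ciInf_of_finite (f := g)
  rw [← hi]
  exact (ciInf_le (Finite.bddBelow_range f) i).trans_lt (h i)

theorem div_lt_mul_div_of_lt_mul {p a b α : ℝ} (hp : 0 < p) (ha : 0 < a) (hb : 0 < b)
    (h : b < α * a) : p / a < α * p / b := by
  rw [div_lt_div_iff₀ ha hb]
  calc p * b < p * (α * a) := mul_lt_mul_of_pos_left h hp
    _ = α * p * a := by ring

theorem sif_min_ratio_strict_mono_general (k : ℕ) (hk : 0 < k)
    (f : (Fin k → ℝ) → (Fin k → ℝ))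
    (hpos : ∀ x : Fin k → ℝ, (∀ i, 0 ≤ x i) → ∀ i, 0 < f x i)
    (hscale : ∀ α : ℝ, 1 < α → ∀ x : Fin k → ℝ, (∀ i, 0 ≤ x i) →
      ∀ i, f (α • x) i < α * f x i) :
    ∀ p : Fin k → ℝ, (∀ i, 0 < p i) → ∀ α : ℝ, 1 < α →
      (⨅ l, p l / f p l) < ⨅ l, (α * p l) / f (α • p) l := by
  intro p hp α hα
  have : Nonempty (Fin k) := ⟨⟨0, hk⟩⟩
  have hp0 : ∀ i, 0 ≤ p i := fun i => (hp i).le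
  have hαp0 : ∀ i, 0 ≤ (α • p) i := fun i => mul_nonneg (zero_le_one.trans hα.le) (hp0 i)
  refine ciInf_lt_ciInf_of_forall_lt fun l => ?_
  exact div_lt_mul_div_of_lt_mul (hp l) (hpos p hp0 l) (hpos _ hαp0 l) (hscale α hα p hp0 l)

/-- For a standard interference function `f`, every positive `p`, and
every `α > 1`, `min_l (α·p_l)/f_l(α·p) > min_l p_l/f_l(p)`. -/
theorem sif_min_ratio_strict_mono (k : ℕ) (hk : 0 < k)
    (f : (Fin k → ℝ) → (Fin k → ℝ))
    (hpos : ∀ x : Fin k → ℝ, (∀ i, 0 ≤ x i) → ∀ i, 0 < f x i)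
    (hmono : ∀ x y : Fin k → ℝ, (∀ i, 0 ≤ x i) → x ≤ y → f x ≤ f y)
    (hscale : ∀ α : ℝ, 1 < α → ∀ x : Fin k → ℝ, (∀ i, 0 ≤ x i) →
      ∀ i, f (α • x) i < α * f x i) :
    ∀ p : Fin k → ℝ, (∀ i, 0 < p i) → ∀ α : ℝ, 1 < α →
      (⨅ l, p l / f p l) < ⨅ l, (α * p l) / f (α • p) l :=
  sif_min_ratio_strict_mono_general k hk f hpos hscale
end
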